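/- Let (Ω, F, μ) be a probability space, γ > 0, V a nonempty set of admissible controls, and for each v ∈ V let X_v : Ω → ℝ be square-integrable (MemLp (X_v) 2 μ). Assume the map v ↦ E[X_v] − (γ/2)Var(X_v) is bounded above. Then sup_{v∈V} ( E[X_v] − (γ/2)Var(X_v) ) = sup_{ψ∈ℝ} ( sup_{v∈V} E[(1 − γψ)X_v − (γ/2)X_v²] − (γ/2)ψ² ). -/

import Mathlib

/-!
Writing `m = E[X]` and `J(X) = E[X] - (γ/2) Var(X)`, completing the square in `ψ` gives
`E[(1 - γψ)X - (γ/2)X²] - (γ/2)ψ² = J(X) - (γ/2)(ψ + m)²`.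
So each dual term is dominated by the mean–variance value, with equality at `ψ = -m`,
and the two suprema may be interchanged.
-/

open MeasureTheory Set

theorem ciSup_ciSup_eq_ciSup_of_le_of_exists_eq {α ι V : Type*} [ConditionallyCompleteLattice α]
    [Nonempty V] {f : V → α} (hf : BddAbove (range f)) {g : ι → V → α}
    (hle : ∀ i v, g i v ≤ f v) (heq : ∀ v, ∃ i, g i v = f v) :
    ⨆ i, ⨆ v, g i v = ⨆ v, f v := by
  have : Nonempty ι := let ⟨i, _⟩ := heq (Classical.arbitrary V); ⟨i⟩
  obtain ⟨M, hM⟩ := hf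
  have hrow : ∀ i, BddAbove (range (g i)) := fun i =>
    ⟨M, forall_mem_range.2 fun v => (hle i v).trans (hM ⟨v, rfl⟩)⟩
  have hrow_le : ∀ i, ⨆ v, g i v ≤ ⨆ v, f v := fun i => ciSup_mono ⟨M, hM⟩ (hle i)
  refine le_antisymm (ciSup_le hrow_le) (ciSup_le fun v => ?_)
  obtain ⟨i, hi⟩ := heq v
  calc f v = g i v := hi.symm
    _ ≤ ⨆ v, g i v := le_ciSup (hrow i) v
    _ ≤ ⨆ i, ⨆ v, g i v := le_ciSup ⟨_, forall_mem_range.2 hrow_le⟩ i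

section MeanVariance

variable {Ω : Type*} [MeasurableSpace Ω] (μ : Measure Ω) (γ : ℝ)

noncomputable def meanVariance (X : Ω → ℝ) : ℝ :=
  (∫ ω, X ω ∂μ) - γ / 2 * ((∫ ω, X ω ^ 2 ∂μ) - (∫ ω, X ω ∂μ) ^ 2)

theorem integral_dual_sub_sq_eq [IsFiniteMeasure μ] {X : Ω → ℝ} (hX : MemLp X 2 μ) (ψ : ℝ) :
    (∫ ω, ((1 - γ * ψ) * X ω - γ / 2 * X ω ^ 2) ∂μ) - γ / 2 * ψ ^ 2 =
      meanVariance μ γ X - γ / 2 * (ψ + ∫ ω, X ω ∂μ) ^ 2 := by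
  rw [integral_sub ((hX.integrable one_le_two).const_mul _) (hX.integrable_sq.const_mul _),
    integral_const_mul, integral_const_mul, meanVariance]
  ring

end MeanVariance

/-- Dual formulation of the optimal mean–variance value: if for each admissible control
`v` in a nonempty set `V` the terminal wealth `X v` is square-integrable and the
mean–variance objective `v ↦ E[X v] - (γ/2)Var(X v)` is bounded above, then
`sup_v (E[X v] - (γ/2)Var(X v))
  = sup_{ψ ∈ ℝ} ( sup_v E[(1 - γψ)X v - (γ/2)(X v)²] - (γ/2)ψ² )`,
where `Var(X) = E[X²] - (E[X])²`. -/
theorem sup_mean_variance_eq_sup_dual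
    {Ω : Type*} [MeasurableSpace Ω] (μ : Measure Ω) [IsProbabilityMeasure μ]
    (γ : ℝ) (hγ : 0 < γ)
    {V : Type*} [Nonempty V] (X : V → Ω → ℝ)
    (hX : ∀ v : V, MemLp (X v) 2 μ)
    (hbdd : BddAbove (Set.range fun v : V =>
      (∫ ω, X v ω ∂μ) - γ / 2 * ((∫ ω, (X v ω) ^ 2 ∂μ) - (∫ ω, X v ω ∂μ) ^ 2))) :
    (⨆ v : V,
        ((∫ ω, X v ω ∂μ) - γ / 2 * ((∫ ω, (X v ω) ^ 2 ∂μ) - (∫ ω, X v ω ∂μ) ^ 2))) =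
      ⨆ ψ : ℝ,
        ((⨆ v : V, ∫ ω, ((1 - γ * ψ) * X v ω - γ / 2 * (X v ω) ^ 2) ∂μ) -
          γ / 2 * ψ ^ 2) := by
  change BddAbove (range fun v => meanVariance μ γ (X v)) at hbdd
  change ⨆ v, meanVariance μ γ (X v) = _
  have hsq := fun ψ v => integral_dual_sub_sq_eq μ γ (hX v) ψ
  have hle : ∀ ψ v, (∫ ω, ((1 - γ * ψ) * X v ω - γ / 2 * X v ω ^ 2) ∂μ) - γ / 2 * ψ ^ 2 ≤
      meanVariance μ γ (X v) := fun ψ v => by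
    rw [hsq]
    exact sub_le_self _ (by positivity)
  obtain ⟨M, hM⟩ := hbdd
  have hrow : ∀ ψ, BddAbove (range fun v => ∫ ω, ((1 - γ * ψ) * X v ω - γ / 2 * X v ω ^ 2) ∂μ) :=
    fun ψ => ⟨M + γ / 2 * ψ ^ 2, forall_mem_range.2 fun v => by
      linarith [hle ψ v, hM ⟨v, rfl⟩]⟩
  simp_rw [ciSup_sub (hrow _)]
  exact (ciSup_ciSup_eq_ciSup_of_le_of_exists_eq ⟨M, hM⟩ hle
    fun v => ⟨-∫ ω, X v ω ∂μ, by rw [hsq]; simp⟩).symm
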